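/- The orthogonal complement of the fixed-point sublattice E₈^τ = {x ∈ E₈ : τ(x) = x} in E₈, namely {x ∈ E₈ : (x,y) = 0 for all y ∈ E₈^τ}, is isometric to the lattice A₆. -/
import Mathlib


/-- The `E₈` lattice inside `ℝ⁸`: all coordinates in `ℤ` or all in `ℤ + 1/2`,
with even coordinate sum. -/
def E8 : Set (Fin 8 → ℝ) :=
  {x | ((∀ i, ∃ k : ℤ, x i = k) ∨ (∀ i, ∃ k : ℤ, x i = k + 1 / 2)) ∧
    ∃ k : ℤ, ∑ i, x i = 2 * k}

/-- The order-7 isometry `τ` of `ℝ⁸`: `e₀↦e₀, e₁↦e₇, eᵢ↦eᵢ₋₁` for `2 ≤ i ≤ 7`,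
written in coordinates. -/
def tau7 (x : Fin 8 → ℝ) : Fin 8 → ℝ := x ∘ ![0, 2, 3, 4, 5, 6, 7, 1]

/-- The lattice `A₆` inside `ℤ⁷`: coordinates sum to zero. -/
def A6set : Set (Fin 7 → ℤ) := {v | ∑ i, v i = 0}

/-- The orthogonal complement of the fixed-point sublattice `E₈^τ` in `E₈`. -/
def E8tauPerp : Set (Fin 8 → ℝ) :=
  {x | x ∈ E8 ∧ ∀ y, (y ∈ E8 ∧ tau7 y = y) → ∑ i, x i * y i = 0}

/-- The embedding of `A₆` into `ℝ⁸`. -/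
def fA6 (v : Fin 7 → ℤ) : Fin 8 → ℝ :=
  ![0, v 0, v 1, v 2, v 3, v 4, v 5, v 6]

@[simp] lemma fA6_0 (v : Fin 7 → ℤ) : fA6 v 0 = 0 := rfl
@[simp] lemma fA6_1 (v : Fin 7 → ℤ) : fA6 v 1 = v 0 := rfl
@[simp] lemma fA6_2 (v : Fin 7 → ℤ) : fA6 v 2 = v 1 := rfl
@[simp] lemma fA6_3 (v : Fin 7 → ℤ) : fA6 v 3 = v 2 := rfl
@[simp] lemma fA6_4 (v : Fin 7 → ℤ) : fA6 v 4 = v 3 := rfl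
@[simp] lemma fA6_5 (v : Fin 7 → ℤ) : fA6 v 5 = v 4 := rfl
@[simp] lemma fA6_6 (v : Fin 7 → ℤ) : fA6 v 6 = v 5 := rfl
@[simp] lemma fA6_7 (v : Fin 7 → ℤ) : fA6 v 7 = v 6 := rfl

/-- The vector `(2,0,…,0)`. -/
def y2v : Fin 8 → ℝ := ![2, 0, 0, 0, 0, 0, 0, 0]

@[simp] lemma y2v_0 : y2v 0 = 2 := rfl
@[simp] lemma y2v_1 : y2v 1 = 0 := rfl
@[simp] lemma y2v_2 : y2v 2 = 0 := rfl
@[simp] lemma y2v_3 : y2v 3 = 0 := rfl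
@[simp] lemma y2v_4 : y2v 4 = 0 := rfl
@[simp] lemma y2v_5 : y2v 5 = 0 := rfl
@[simp] lemma y2v_6 : y2v 6 = 0 := rfl
@[simp] lemma y2v_7 : y2v 7 = 0 := rfl

/-- the orthogonal complement of `E₈^τ` in `E₈` is isometric to
`A₆`: there is an additive bijection from `A₆` onto the orthogonal complement
preserving the bilinear forms. -/
theorem E8_tau_perp_isometric_A6 :
    ∃ f : (Fin 7 → ℤ) → (Fin 8 → ℝ),
      (∀ u ∈ A6set, ∀ v ∈ A6set, f (u + v) = f u + f v) ∧
      Set.InjOn f A6set ∧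
      f '' A6set = E8tauPerp ∧
      (∀ u ∈ A6set, ∀ v ∈ A6set,
        ∑ i, f u i * f v i = ((∑ i, u i * v i : ℤ) : ℝ)) := by
  refine ⟨fA6, ?_, ?_, ?_, ?_⟩
  · intro u _ v _
    funext i
    fin_cases i <;> simp [Pi.add_apply]
  · intro u _ v _ h
    funext j
    have g : ∀ i : Fin 8, fA6 u i = fA6 v i := congrFun h
    fin_cases j
    · have := g 1; rw [fA6_1, fA6_1] at this; exact_mod_cast this
    · have := g 2; rw [fA6_2, fA6_2] at this; exact_mod_cast this
    · have := g 3; rw [fA6_3, fA6_3] at this; exact_mod_cast this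
    · have := g 4; rw [fA6_4, fA6_4] at this; exact_mod_cast this
    · have := g 5; rw [fA6_5, fA6_5] at this; exact_mod_cast this
    · have := g 6; rw [fA6_6, fA6_6] at this; exact_mod_cast this
    · have := g 7; rw [fA6_7, fA6_7] at this; exact_mod_cast this
  · ext x
    constructor
    · rintro ⟨v, hv, rfl⟩
      have h7 : v 0 + v 1 + v 2 + v 3 + v 4 + v 5 + v 6 = 0 := by
        have := hv
        rwa [A6set, Set.mem_setOf_eq, Fin.sum_univ_seven] at this
      have h7' : (v 0 : ℝ) + v 1 + v 2 + v 3 + v 4 + v 5 + v 6 = 0 := by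
        exact_mod_cast h7
      refine ⟨⟨Or.inl fun i => ?_, ⟨0, ?_⟩⟩, ?_⟩
      · fin_cases i
        exacts [⟨0, by simp⟩, ⟨v 0, by simp⟩, ⟨v 1, by simp⟩,
          ⟨v 2, by simp⟩, ⟨v 3, by simp⟩, ⟨v 4, by simp⟩,
          ⟨v 5, by simp⟩, ⟨v 6, by simp⟩]
      · rw [Fin.sum_univ_eight]
        simp only [fA6_0, fA6_1, fA6_2, fA6_3, fA6_4, fA6_5, fA6_6, fA6_7]
        push_cast
        linarith
      · rintro y ⟨-, hyfix⟩
        have h2 : y 2 = y 1 := congrFun hyfix 1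
        have h3 : y 3 = y 2 := congrFun hyfix 2
        have h4 : y 4 = y 3 := congrFun hyfix 3
        have h5 : y 5 = y 4 := congrFun hyfix 4
        have h6 : y 6 = y 5 := congrFun hyfix 5
        have h7y : y 7 = y 6 := congrFun hyfix 6
        rw [Fin.sum_univ_eight]
        simp only [fA6_0, fA6_1, fA6_2, fA6_3, fA6_4, fA6_5, fA6_6, fA6_7]
        rw [h7y, h6, h5, h4, h3, h2]
        linear_combination y 1 * h7'
    · rintro ⟨⟨hcoord, -⟩, horth⟩
      have hone : (fun _ => (1 : ℝ)) ∈ E8 ∧ tau7 (fun _ => (1 : ℝ)) = fun _ => (1 : ℝ) := by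
        refine ⟨⟨Or.inl fun i => ⟨1, by norm_num⟩, ⟨4, by simp [Fin.sum_univ_eight]; norm_num⟩⟩, rfl⟩
      have htwo : y2v ∈ E8 ∧ tau7 y2v = y2v := by
        constructor
        · refine ⟨Or.inl fun i => ?_, ⟨1, by rw [Fin.sum_univ_eight]; simp⟩⟩
          fin_cases i
          exacts [⟨2, by norm_num [y2v]⟩, ⟨0, by norm_num [y2v]⟩, ⟨0, by norm_num [y2v]⟩,
            ⟨0, by norm_num [y2v]⟩, ⟨0, by norm_num [y2v]⟩, ⟨0, by norm_num [y2v]⟩,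
            ⟨0, by norm_num [y2v]⟩, ⟨0, by norm_num [y2v]⟩]
        · funext i; fin_cases i <;> rfl
      have hsum : x 0 + x 1 + x 2 + x 3 + x 4 + x 5 + x 6 + x 7 = 0 := by
        have := horth _ hone
        rw [Fin.sum_univ_eight] at this
        simpa using this
      have h0 : x 0 = 0 := by
        have := horth _ htwo
        rw [Fin.sum_univ_eight] at this
        simp only [y2v_0, y2v_1, y2v_2, y2v_3, y2v_4, y2v_5, y2v_6, y2v_7,
          mul_zero, add_zero, zero_add] at this
        linarith
      have hint : ∀ i, ∃ k : ℤ, x i = k := by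
        rcases hcoord with h | h
        · exact h
        · exfalso
          obtain ⟨k, hk⟩ := h 0
          rw [h0] at hk
          have : (2 * k : ℤ) = (-1 : ℤ) := by
            have : (2 * (k : ℝ)) = -1 := by linarith
            exact_mod_cast this
          omega
      set v : Fin 7 → ℤ := fun j => (hint j.succ).choose with hvdef
      have hv_spec : ∀ j : Fin 7, x j.succ = (v j : ℝ) := fun j => (hint j.succ).choose_spec
      have e1 : x 1 = (v 0 : ℝ) := hv_spec 0
      have e2 : x 2 = (v 1 : ℝ) := hv_spec 1
      have e3 : x 3 = (v 2 : ℝ) := hv_spec 2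
      have e4 : x 4 = (v 3 : ℝ) := hv_spec 3
      have e5 : x 5 = (v 4 : ℝ) := hv_spec 4
      have e6 : x 6 = (v 5 : ℝ) := hv_spec 5
      have e7 : x 7 = (v 6 : ℝ) := hv_spec 6
      refine ⟨v, ?_, ?_⟩
      · show ∑ i, v i = 0
        have : ((∑ i, v i : ℤ) : ℝ) = 0 := by
          push_cast
          rw [Fin.sum_univ_seven]
          linarith
        exact_mod_cast this
      · funext i
        fin_cases i
        · exact h0.symm
        · exact e1.symm
        · exact e2.symm
        · exact e3.symm
        · exact e4.symm
        · exact e5.symm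
        · exact e6.symm
        · exact e7.symm
  · intro u _ v _
    rw [Fin.sum_univ_eight, Fin.sum_univ_seven]
    simp only [fA6_0, fA6_1, fA6_2, fA6_3, fA6_4, fA6_5, fA6_6, fA6_7]
    push_cast
    ring
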